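/- For each integer n ≥ 0, the Bernoulli polynomial B_n(x) equals (−1)^n times the determinant of the (n+1)×(n+1) matrix whose first column has entries 1, x, ..., x^n and whose (i,j)-entry for j ≥ 2 is C(i−1, j−2)/(i−j+2) if i ≥ j−1 and 0 otherwise. -/
import Mathlib

open Polynomial Matrix Finset

lemma pow_eq_sum_bern (m : ℕ) (x : ℚ) :
    x ^ m = ∑ k ∈ Finset.range (m + 1),
      (m.choose k : ℚ) / ((m + 1 - k : ℕ) : ℚ) * (Polynomial.bernoulli k).eval x := by
  have h := congrArg (Polynomial.eval x) (Polynomial.sum_bernoulli m)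
  simp only [Polynomial.eval_finset_sum, Polynomial.eval_smul, Polynomial.eval_monomial,
    smul_eq_mul] at h
  have hm : ((m:ℚ)+1) ≠ 0 := by positivity
  have h2 : x ^ m = ∑ k ∈ Finset.range (m+1),
      ((m+1).choose k : ℚ)/((m:ℚ)+1) * (Polynomial.bernoulli k).eval x := by
    simp_rw [div_mul_eq_mul_div, ← Finset.sum_div]
    rw [h]
    field_simp

  rw [h2]
  refine Finset.sum_congr rfl fun k hk => ?_
  rw [Finset.mem_range, Nat.lt_succ_iff] at hk
  congr 1
  have key : m.choose k * (m + 1) = (m+1).choose k * (m + 1 - k) := Nat.choose_mul_succ_eq m k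
  have hd : ((m + 1 - k : ℕ) : ℚ) ≠ 0 := by
    have : 0 < m + 1 - k := by omega
    exact_mod_cast this.ne'
  rw [div_eq_div_iff hm hd]
  exact_mod_cast congrArg (Nat.cast (R := ℚ)) key.symm

lemma pow_eq_sum_bern' (n i : ℕ) (hi : i ≤ n) (x : ℚ) :
    x ^ i = ∑ k ∈ Finset.range (n + 1),
      (i.choose k : ℚ) / ((i + 1 - k : ℕ) : ℚ) * (Polynomial.bernoulli k).eval x := by
  rw [pow_eq_sum_bern i x]
  refine Finset.sum_subset (by simp; omega) fun k _ hk => ?_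
  rw [Finset.mem_range, Nat.lt_succ_iff, not_le] at hk
  rw [Nat.choose_eq_zero_of_lt hk]
  simp
open Polynomial Matrix Finset




/-- The determinantal expression for the classical Bernoulli polynomials. -/
theorem bernoulliPoly_det (n : ℕ) (x : ℚ) :
    (Polynomial.bernoulli n).eval x =
      (-1 : ℚ) ^ n *
        (Matrix.of fun i j : Fin (n + 1) =>
          if (j : ℕ) = 0 then x ^ (i : ℕ)
          else if (j : ℕ) ≤ (i : ℕ) + 1 then
            ((i : ℕ).choose ((j : ℕ) - 1) : ℚ) / (((i : ℕ) + 2 - (j : ℕ) : ℕ) : ℚ)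
          else 0).det := by
  set M : Matrix (Fin (n+1)) (Fin (n+1)) ℚ := Matrix.of fun i j : Fin (n + 1) =>
          if (j : ℕ) = 0 then x ^ (i : ℕ)
          else if (j : ℕ) ≤ (i : ℕ) + 1 then
            ((i : ℕ).choose ((j : ℕ) - 1) : ℚ) / (((i : ℕ) + 2 - (j : ℕ) : ℕ) : ℚ)
          else 0 with hM
  have hMj : ∀ (i : Fin (n+1)) (j : Fin n),
      M i j.succ = ((i:ℕ).choose (j:ℕ) : ℚ) / (((i:ℕ) + 1 - (j:ℕ) : ℕ) : ℚ) := by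
    intro i j
    simp only [hM, Matrix.of_apply, Fin.val_succ]
    rw [if_neg (by omega)]
    split_ifs with h
    · congr 2 <;> omega
    · rw [Nat.choose_eq_zero_of_lt (by omega)]
      simp
  set u : Fin (n+1) → ℚ := fun i => if (i:ℕ) = n then 1 else 0 with hu
  set b := (Polynomial.bernoulli n).eval x with hb
  set Bm := M.updateCol 0 (fun i => b * u i) with hBm
  set c : Fin (n+1) → ℚ := fun j => if (j:ℕ) = 0 then 1 else
    (Polynomial.bernoulli ((j:ℕ)-1)).eval x with hc
  have step1 : M = Bm.updateCol 0 (fun i => ∑ j, c j • Bm i j) := by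
    ext i j
    rcases eq_or_ne j 0 with hj | hj
    · subst hj
      rw [Matrix.updateCol_self]
      have lhs : M i 0 = x ^ (i:ℕ) := by simp [hM]
      rw [lhs]
      rw [Fin.sum_univ_succ]
      have h0 : c 0 • Bm i 0 = b * u i := by
        simp [hc, hBm, Matrix.updateCol_self]
      rw [h0]
      have hterm : ∀ k : Fin n, c k.succ • Bm i k.succ =
          ((i:ℕ).choose (k:ℕ) : ℚ) / (((i:ℕ) + 1 - (k:ℕ) : ℕ) : ℚ) *
            (Polynomial.bernoulli (k:ℕ)).eval x := by
        intro k
        rw [hBm, Matrix.updateCol_ne (by simp [Fin.succ_ne_zero]), hMj]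
        simp only [hc, Fin.val_succ, smul_eq_mul]
        rw [if_neg (by omega), Nat.add_sub_cancel]
        ring
      simp_rw [hterm]
      have key := pow_eq_sum_bern' n (i:ℕ) (by omega) x
      rw [key, ← Fin.sum_univ_eq_sum_range
        (fun k => ((i:ℕ).choose k : ℚ) / (((i:ℕ) + 1 - k : ℕ) : ℚ) *
          (Polynomial.bernoulli k).eval x) (n+1), Fin.sum_univ_castSucc]
      simp only [Fin.coe_castSucc, Fin.val_last]
      rw [add_comm]
      congr 1
      rcases eq_or_ne (i:ℕ) n with hi | hi
      · rw [hi]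
        simp [hu, hi, hb]
      · have : (i:ℕ) < n := by omega
        rw [Nat.choose_eq_zero_of_lt this]
        simp [hu, hi]
    · rw [Matrix.updateCol_ne hj, hBm, Matrix.updateCol_ne hj]
  have step2 : M.det = Bm.det := by
    rw [step1, Matrix.det_updateCol_sum]
    have : c 0 = 1 := by simp [hc]
    rw [this, one_smul]
  have step3 : Bm.det = b * (M.updateCol 0 u).det := by
    rw [hBm]
    have : (fun i => b * u i) = b • u := by ext i; simp
    rw [this, Matrix.det_updateCol_smul]
  set T := (M.updateCol 0 u).submatrix (Fin.last n).succAbove Fin.succ with hT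
  have hTentry : ∀ i j : Fin n,
      T i j = ((i:ℕ).choose (j:ℕ) : ℚ) / (((i:ℕ) + 1 - (j:ℕ) : ℕ) : ℚ) := by
    intro i j
    rw [hT, Matrix.submatrix_apply, Fin.succAbove_last,
      Matrix.updateCol_ne (Fin.succ_ne_zero j), hMj]
    simp
  have step4 : (M.updateCol 0 u).det = (-1:ℚ)^n * T.det := by
    rw [Matrix.det_succ_column_zero]
    rw [Finset.sum_eq_single (Fin.last n)]
    · rw [Matrix.updateCol_self]
      have h1 : u (Fin.last n) = 1 := by simp [hu]
      rw [h1, Fin.val_last, mul_one, hT, Fin.succAbove_last]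
    · intro i _ hi
      rw [Matrix.updateCol_self]
      have : (i:ℕ) ≠ n := fun h => hi (Fin.ext h)
      simp [hu, this]
    · simp
  have step5 : T.det = 1 := by
    rw [Matrix.det_of_lowerTriangular T ?ht]
    · refine Finset.prod_eq_one fun i _ => ?_
      rw [hTentry]
      simp
    · intro i j hij
      have : (i:ℕ) < (j:ℕ) := hij
      rw [hTentry, Nat.choose_eq_zero_of_lt this]
      simp
  rw [step2, step3, step4, step5, mul_one, ← mul_assoc, mul_comm ((-1:ℚ)^n) b,
    mul_assoc, ← pow_add, Even.neg_one_pow ⟨n, rfl⟩, mul_one]
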